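/- arXiv:2011.12433 — 4 statements merged into one kernel-verified Lean document; each statement's English description precedes it below -/
import Mathlib

section
/- Let g(x) = sgn(x)·|x|^α for some 0 < α ≤ 1. Then for any h ≥ 0, the maximum over all real x of g(x+h) − g(x) equals 2^(1−α)·h^α, attained at x = −h/2. -/
open Real NNReal

private lemma g_of_nonneg {α x : ℝ} (hx : 0 ≤ x) (hα0 : 0 < α) :
    Real.sign x * |x| ^ α = x ^ α := by
  rcases hx.eq_or_lt with rfl | hx'
  · simp [Real.sign_zero, Real.zero_rpow hα0.ne']
  · rw [Real.sign_of_pos hx', abs_of_pos hx', one_mul]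

private lemma g_of_nonpos {α x : ℝ} (hx : x ≤ 0) (hα0 : 0 < α) :
    Real.sign x * |x| ^ α = -((-x) ^ α) := by
  rcases hx.eq_or_lt with rfl | hx'
  · simp [Real.sign_zero, Real.zero_rpow hα0.ne']
  · rw [Real.sign_of_neg hx', abs_of_neg hx', neg_one_mul]

private lemma subadd {α : ℝ} (hα0 : 0 < α) (hα1 : α ≤ 1) {a b : ℝ} (ha : 0 ≤ a) (hb : 0 ≤ b) :
    (a + b) ^ α ≤ a ^ α + b ^ α := by
  have := NNReal.rpow_add_le_add_rpow (⟨a, ha⟩ : ℝ≥0) ⟨b, hb⟩ hα0.le hα1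
  exact_mod_cast this

private lemma two_rpow_eq {α : ℝ} : (2 : ℝ) ^ (1 - α) = 2 / 2 ^ α := by
  rw [Real.rpow_sub (by norm_num), Real.rpow_one]

private lemma key {α : ℝ} (hα0 : 0 < α) (hα1 : α ≤ 1) {a b : ℝ} (ha : 0 ≤ a) (hb : 0 ≤ b) :
    a ^ α + b ^ α ≤ 2 ^ (1 - α) * (a + b) ^ α := by
  have hc := (Real.concaveOn_rpow hα0.le hα1).2 (Set.mem_Ici.2 ha) (Set.mem_Ici.2 hb)
    (by norm_num : (0:ℝ) ≤ 1/2) (by norm_num : (0:ℝ) ≤ 1/2) (by norm_num)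
  simp only [smul_eq_mul] at hc
  have h2 : (0:ℝ) < 2 ^ α := Real.rpow_pos_of_pos (by norm_num) α
  have hdiv : ((a + b) / 2) ^ α = (a + b) ^ α / 2 ^ α :=
    Real.div_rpow (by linarith) (by norm_num) α
  have h1 : (1/2 * a + 1/2 * b) = (a + b) / 2 := by ring
  rw [h1, hdiv] at hc
  have hc2 := (le_div_iff₀ h2).mp hc
  rw [two_rpow_eq, div_mul_eq_mul_div, le_div_iff₀ h2]
  nlinarith [hc2, h2.le]

/-- For `g(x) = sgn(x)·|x|^α` with `0 < α ≤ 1` and `h ≥ 0`, the maximum over all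
real `x` of `g(x+h) − g(x)` equals `2^(1−α)·h^α`, attained at `x = −h/2`. -/
theorem max_sign_rpow_increment (α : ℝ) (hα0 : 0 < α) (hα1 : α ≤ 1) (h : ℝ) (hh : 0 ≤ h) :
    let g : ℝ → ℝ := fun x => Real.sign x * |x| ^ α
    IsGreatest (Set.range fun x => g (x + h) - g x) ((2 : ℝ) ^ (1 - α) * h ^ α) ∧
      g (-h / 2 + h) - g (-h / 2) = (2 : ℝ) ^ (1 - α) * h ^ α := by
  intro g
  have hh2 : (0:ℝ) ≤ h / 2 := by linarith
  have h2 : (0:ℝ) < 2 ^ α := Real.rpow_pos_of_pos (by norm_num) α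
  have hattain : g (-h / 2 + h) - g (-h / 2) = (2 : ℝ) ^ (1 - α) * h ^ α := by
    have e1 : -h / 2 + h = h / 2 := by ring
    have e2 : -(-h / 2) = h / 2 := by ring
    show Real.sign (-h/2 + h) * |(-h/2 + h)| ^ α - Real.sign (-h/2) * |(-h/2)| ^ α = _
    rw [e1, g_of_nonneg hh2 hα0, g_of_nonpos (by linarith : -h/2 ≤ 0) hα0, e2]
    rw [Real.div_rpow hh (by norm_num), two_rpow_eq]
    field_simp
    ring
  refine ⟨⟨⟨-h/2, hattain⟩, ?_⟩, hattain⟩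
  rintro y ⟨x, rfl⟩
  have hone : (1:ℝ) ≤ 2 ^ (1 - α) := Real.one_le_rpow (by norm_num) (by linarith)
  have hhα : (0:ℝ) ≤ h ^ α := Real.rpow_nonneg hh α
  show Real.sign (x + h) * |x + h| ^ α - Real.sign x * |x| ^ α ≤ _
  rcases le_or_gt 0 x with hx | hx
  · rw [g_of_nonneg hx hα0, g_of_nonneg (by linarith) hα0]
    have := subadd hα0 hα1 hx hh
    nlinarith
  · rcases le_or_gt (x + h) 0 with hxh | hxh
    · rw [g_of_nonpos hx.le hα0, g_of_nonpos hxh hα0]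
      have := subadd hα0 hα1 (by linarith : (0:ℝ) ≤ -(x + h)) hh
      have e : -(x + h) + h = -x := by ring
      rw [e] at this
      nlinarith
    · rw [g_of_nonpos hx.le hα0, g_of_nonneg hxh.le hα0]
      have := key hα0 hα1 hxh.le (by linarith : (0:ℝ) ≤ -x)
      have e : x + h + -x = h := by ring
      rw [e] at this
      linarith
end

section
/- Let S ⊆ [d] with |S| = d/2 (d even), and let X be the random vector in ℝ^d which equals 0 with probability 1 − d/(8n) and equals n^(1/(1+α))·d^(−(1−α)/(2(1+α)))·e_i with probability 1/(4n) for each i ∈ S, where e_i is the i-th standard basis vector. Then for every unit vector v, E[|⟨v, X − μ_S⟩|^(1+α)] ≤ 1/2, where μ_S = E[X]. -/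
open MeasureTheory Real
open scoped InnerProductSpace ENNReal

/-- The hard distribution `D_S`: mass `1 - d/(8n)` at `0` and mass `1/(4n)` at
`n^(1/(1+α))·d^(−(1−α)/(2(1+α)))·eᵢ` for each `i ∈ S`. -/
noncomputable def hardDist (d n : ℕ) (α : ℝ) (S : Finset (Fin d)) :
    Measure (EuclideanSpace ℝ (Fin d)) :=
  ENNReal.ofReal (1 - (d : ℝ) / (8 * n)) • Measure.dirac 0 +
    ∑ i ∈ S, ENNReal.ofReal (1 / (4 * n)) •
      Measure.dirac
        (((n : ℝ) ^ ((1 : ℝ) / (1 + α)) * (d : ℝ) ^ (-(1 - α) / (2 * (1 + α)))) •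
          EuclideanSpace.single i 1)

/-- The mean `μ_S` of `D_S`. -/
noncomputable def hardMean (d n : ℕ) (α : ℝ) (S : Finset (Fin d)) :
    EuclideanSpace ℝ (Fin d) :=
  WithLp.toLp 2 fun i => if i ∈ S then ((n : ℝ) ^ (-α / (1 + α)) * (d : ℝ) ^ (-(1 - α) / (2 * (1 + α)))) / 4
           else 0

set_option maxHeartbeats 1000000 in
/-- The distribution `D_S` satisfies the weak `(1+α)`-moment condition with constant `1/2`:
for every unit vector `v`, `E[|⟨v, X − μ_S⟩|^(1+α)] ≤ 1/2`. -/
theorem hardDist_weak_moment (d n : ℕ) (hd : Even d) (hd0 : 0 < d) (hn0 : 0 < n)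
    (hnd : (d : ℝ) / 8 ≤ n) (α : ℝ) (hα0 : 0 < α) (hα1 : α ≤ 1)
    (S : Finset (Fin d)) (hS : 2 * S.card = d) :
    ∀ v : EuclideanSpace ℝ (Fin d), ‖v‖ = 1 →
      ∫ x, |⟪v, x - hardMean d n α S⟫_ℝ| ^ (1 + α) ∂(hardDist d n α S) ≤ 1 / 2 := by
  intro v hv
  have hn0' : (0 : ℝ) < n := by exact_mod_cast hn0
  have hd0' : (0 : ℝ) < d := by exact_mod_cast hd0
  have hα0' : (0 : ℝ) < 1 + α := by linarith
  have hn4 : (0 : ℝ) < 4 * n := by linarith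
  have hn8 : (0 : ℝ) < 8 * n := by linarith
  have hd8n : (d : ℝ) / (8 * n) ≤ 1 := by
    rw [div_le_one hn8]; linarith
  have hdn8 : (d : ℝ) / n ≤ 8 := by
    rw [div_le_iff₀ hn0']; linarith
  set p : ℝ := 1 + α with hp_def
  clear_value p
  have hp1 : (1 : ℝ) ≤ p := by rw [hp_def]; linarith
  have hp0 : (0 : ℝ) < p := by linarith
  have hp2 : p ≤ 2 := by rw [hp_def]; linarith
  set c : ℝ := (n : ℝ) ^ ((1 : ℝ) / (1 + α)) * (d : ℝ) ^ (-(1 - α) / (2 * (1 + α))) with hc_def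
  clear_value c
  have hc0 : 0 < c := by
    rw [hc_def]
    exact mul_pos (Real.rpow_pos_of_pos hn0' _) (Real.rpow_pos_of_pos hd0' _)
  set t : ℝ := ⟪v, hardMean d n α S⟫_ℝ with ht_def
  clear_value t
  -- continuity of the integrand
  have hcont : Continuous fun x : EuclideanSpace ℝ (Fin d) =>
      |⟪v, x - hardMean d n α S⟫_ℝ| ^ p := by
    have h1 : Continuous fun x : EuclideanSpace ℝ (Fin d) => |⟪v, x - hardMean d n α S⟫_ℝ| :=
      (Continuous.inner continuous_const (continuous_id.sub continuous_const)).abs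
    have h2 : Continuous fun y : ℝ => y ^ p := by
      rw [continuous_iff_continuousAt]
      intro y
      exact Real.continuousAt_rpow_const y p (Or.inr hp0.le)
    exact h2.comp h1
  have hIdirac : ∀ a : EuclideanSpace ℝ (Fin d),
      Integrable (fun x => |⟪v, x - hardMean d n α S⟫_ℝ| ^ p) (Measure.dirac a) := by
    intro a
    refine ⟨hcont.aestronglyMeasurable, ?_⟩
    have : (∫⁻ x, ‖|⟪v, x - hardMean d n α S⟫_ℝ| ^ p‖₊ ∂Measure.dirac a) < ⊤ := by
      rw [lintegral_dirac' a (hcont.measurable.nnnorm.coe_nnreal_ennreal)]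
      exact ENNReal.coe_lt_top
    exact this
  have hdirac_eval : ∀ a : EuclideanSpace ℝ (Fin d),
      (∫ x, |⟪v, x - hardMean d n α S⟫_ℝ| ^ p ∂Measure.dirac a)
        = |⟪v, a - hardMean d n α S⟫_ℝ| ^ p :=
    fun a => integral_dirac' _ a hcont.stronglyMeasurable
  have hw0 : (0 : ℝ) ≤ 1 - (d : ℝ) / (8 * n) := by linarith
  have hq0 : (0 : ℝ) ≤ 1 / (4 * (n : ℝ)) := by positivity
  -- the integral as a finite sum
  have key : (∫ x, |⟪v, x - hardMean d n α S⟫_ℝ| ^ p ∂(hardDist d n α S))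
      = (1 - (d : ℝ) / (8 * n)) * |t| ^ p
        + ∑ i ∈ S, 1 / (4 * (n : ℝ)) * |c * v i - t| ^ p := by
    rw [hardDist, ← hc_def]
    rw [integral_add_measure ((hIdirac 0).smul_measure ENNReal.ofReal_ne_top)
      (integrable_finset_sum_measure.2 fun i _ => (hIdirac _).smul_measure ENNReal.ofReal_ne_top)]
    rw [integral_smul_measure,
      integral_finset_sum_measure fun i _ => (hIdirac _).smul_measure ENNReal.ofReal_ne_top]
    simp only [integral_smul_measure, hdirac_eval, smul_eq_mul,
      ENNReal.toReal_ofReal hw0, ENNReal.toReal_ofReal hq0]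
    congr 1
    · rw [zero_sub, inner_neg_right, abs_neg, ht_def]
    · refine Finset.sum_congr rfl fun i hi => ?_
      have : ⟪v, c • EuclideanSpace.single i (1 : ℝ) - hardMean d n α S⟫_ℝ = c * v i - t := by
        rw [inner_sub_right, real_inner_smul_right, ht_def]
        congr 1
        rw [EuclideanSpace.inner_single_right]
        simp
      rw [this]
  rw [key]
  clear key hdirac_eval hIdirac hcont
  -- scalar quantities
  set T : ℝ := ∑ i ∈ S, v i with hT_def
  set sr : ℝ := (S.card : ℝ) with hsr_def
  clear_value T sr
  have hsr : sr = (d : ℝ) / 2 := by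
    rw [hsr_def]
    have h2 : ((2 * S.card : ℕ) : ℝ) = (d : ℝ) := by exact_mod_cast congrArg Nat.cast hS
    push_cast at h2
    linarith
  have hsr0 : 0 < sr := by rw [hsr]; positivity
  have hv2 : ∑ j, (v j) ^ 2 = 1 := by
    have h := EuclideanSpace.norm_eq v
    rw [hv] at h
    have h2 : ∑ j, ‖v j‖ ^ 2 = 1 := Real.sqrt_eq_one.mp h.symm
    simpa [Real.norm_eq_abs, sq_abs] using h2
  have hsum2 : ∑ i ∈ S, (v i) ^ 2 ≤ 1 := by
    rw [← hv2]
    exact Finset.sum_le_sum_of_subset_of_nonneg (Finset.subset_univ S) fun i _ _ => sq_nonneg _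
  have hT2 : T ^ 2 ≤ sr := by
    have h : (∑ i ∈ S, v i) ^ 2 ≤ (S.card : ℝ) * ∑ i ∈ S, (v i) ^ 2 :=
      sq_sum_le_card_mul_sum_sq
    rw [← hT_def, ← hsr_def] at h
    calc T ^ 2 ≤ sr * ∑ i ∈ S, (v i) ^ 2 := h
      _ ≤ sr * 1 := mul_le_mul_of_nonneg_left hsum2 hsr0.le
      _ = sr := mul_one sr
  -- the mean inner product
  have hval : (n : ℝ) ^ (-α / (1 + α)) * (d : ℝ) ^ (-(1 - α) / (2 * (1 + α))) / 4
      = c / (4 * n) := by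
    have h1 : (n : ℝ) ^ (-α / (1 + α)) = (n : ℝ) ^ ((1 : ℝ) / (1 + α)) / n := by
      rw [show -α / (1 + α) = (1 : ℝ) / (1 + α) - 1 by
        field_simp; ring]
      rw [Real.rpow_sub hn0', Real.rpow_one]
    rw [h1, hc_def]; ring
  have hbT : t = c / (4 * n) * T := by
    have h1 : t = ∑ j, v j * hardMean d n α S j := by
      rw [ht_def]
      simp [PiLp.inner_apply, RCLike.inner_apply, conj_trivial]
      exact Finset.sum_congr rfl fun _ _ => mul_comm _ _
    have hmean : ∀ j, hardMean d n α S j = if j ∈ S then c / (4 * (n : ℝ)) else 0 := by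
      intro j
      simp only [hardMean, WithLp.ofLp_toLp]
      by_cases hj : j ∈ S
      · rw [if_pos hj, if_pos hj]; exact hval
      · rw [if_neg hj, if_neg hj]
    rw [h1]
    simp only [hmean, mul_ite, mul_zero]
    rw [Finset.sum_ite_mem, Finset.univ_inter, ← Finset.sum_mul, ← hT_def]
    ring
  -- the quadratic bound  ∑ (c vᵢ - t)² ≤ c²
  have hQ0 : (0 : ℝ) ≤ ∑ i ∈ S, (c * v i - t) ^ 2 := Finset.sum_nonneg fun i _ => sq_nonneg _
  have hQ : ∑ i ∈ S, (c * v i - t) ^ 2 ≤ c ^ 2 := by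
    have expand : ∑ i ∈ S, (c * v i - t) ^ 2
        = c ^ 2 * (∑ i ∈ S, (v i) ^ 2) - 2 * c * t * T + sr * t ^ 2 := by
      have e1 : ∀ i ∈ S, (c * v i - t) ^ 2
          = c ^ 2 * (v i) ^ 2 - (2 * c * t) * (v i) + t ^ 2 := fun i _ => by ring
      rw [Finset.sum_congr rfl e1, Finset.sum_add_distrib, Finset.sum_sub_distrib,
        ← Finset.mul_sum, ← Finset.mul_sum, Finset.sum_const, nsmul_eq_mul,
        ← hT_def, ← hsr_def]
    rw [expand, hbT]
    have h2 : c ^ 2 * (∑ i ∈ S, (v i) ^ 2) ≤ c ^ 2 * 1 :=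
      mul_le_mul_of_nonneg_left hsum2 (sq_nonneg c)
    have hsb : sr * (c / (4 * n)) ≤ 2 * c := by
      rw [hsr]
      have e : (d : ℝ) / 2 * (c / (4 * n)) = c * ((d : ℝ) / (8 * n)) := by ring
      rw [e]
      nlinarith [hc0.le, hd8n]
    have h3 : 0 ≤ (2 * c - sr * (c / (4 * n))) * (c / (4 * n) * T ^ 2) := by
      apply mul_nonneg (by linarith)
      positivity
    have efin : c ^ 2 * (∑ i ∈ S, (v i) ^ 2) - 2 * c * (c / (4 * n) * T) * T
        + sr * (c / (4 * n) * T) ^ 2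
        = c ^ 2 * (∑ i ∈ S, (v i) ^ 2)
          - (2 * c - sr * (c / (4 * n))) * (c / (4 * n) * T ^ 2) := by ring
    rw [efin]
    linarith [h3, h2]
  -- Hölder / power-mean step
  have hHolder : ∑ i ∈ S, |c * v i - t| ^ p
      ≤ (∑ i ∈ S, (c * v i - t) ^ 2) ^ (p / 2) * sr ^ (1 - p / 2) := by
    have hr : (1 : ℝ) ≤ 2 / p := by
      rw [le_div_iff₀ hp0]; linarith
    have key2 := Real.arith_mean_le_rpow_mean S (fun _ => 1 / sr)
      (fun i => |c * v i - t| ^ p)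
      (fun i _ => by positivity)
      (by rw [Finset.sum_const, nsmul_eq_mul, ← hsr_def, mul_one_div, div_self hsr0.ne'])
      (fun i _ => by positivity) hr
    have hzz : ∀ i : Fin d, ((|c * v i - t| ^ p) ^ ((2 : ℝ) / p)) = (c * v i - t) ^ 2 := by
      intro i
      rw [← Real.rpow_mul (abs_nonneg _)]
      rw [show p * (2 / p) = 2 by rw [mul_comm, div_mul_cancel₀ _ hp0.ne']]
      rw [show ((2 : ℝ)) = ((2 : ℕ) : ℝ) by norm_num, Real.rpow_natCast, sq_abs]
    simp only [hzz, one_div_div] at key2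
    rw [← Finset.mul_sum, ← Finset.mul_sum] at key2
    have hsplit : sr ^ (1 - p / 2) = sr * (sr ^ (p / 2))⁻¹ := by
      rw [Real.rpow_sub hsr0, Real.rpow_one, div_eq_mul_inv]
    calc ∑ i ∈ S, |c * v i - t| ^ p
        = sr * (1 / sr * ∑ i ∈ S, |c * v i - t| ^ p) := by
          field_simp
      _ ≤ sr * (1 / sr * ∑ i ∈ S, (c * v i - t) ^ 2) ^ (p / 2) :=
          mul_le_mul_of_nonneg_left key2 hsr0.le
      _ = (∑ i ∈ S, (c * v i - t) ^ 2) ^ (p / 2) * sr ^ (1 - p / 2) := by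
          rw [Real.mul_rpow (by positivity) hQ0, Real.div_rpow zero_le_one hsr0.le,
            Real.one_rpow, hsplit]
          ring
  -- rpow computations
  have hcp : c ^ p = (n : ℝ) * (d : ℝ) ^ (-(1 - α) / 2) := by
    rw [hc_def, Real.mul_rpow (Real.rpow_nonneg hn0'.le _) (Real.rpow_nonneg hd0'.le _),
      ← Real.rpow_mul hn0'.le, ← Real.rpow_mul hd0'.le]
    rw [show (1 : ℝ) / (1 + α) * p = 1 by
        rw [hp_def]; field_simp]
    rw [show -(1 - α) / (2 * (1 + α)) * p = -(1 - α) / 2 by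
        rw [hp_def]; field_simp]
    rw [Real.rpow_one]
  have h2_2 : ((2 : ℝ)) ^ (2 : ℝ) = 4 := by
    rw [show (2 : ℝ) = ((2 : ℕ) : ℝ) by norm_num]
    rw [Real.rpow_natCast]; norm_num
  have h2_3 : ((2 : ℝ)) ^ (3 : ℝ) = 8 := by
    rw [show (3 : ℝ) = ((3 : ℕ) : ℝ) by norm_num]
    rw [Real.rpow_natCast]; norm_num
  have hβ0 : (0 : ℝ) ≤ (1 - α) / 2 := by linarith
  -- Part B : the sum term is at most 1/4
  have partB : ∑ i ∈ S, 1 / (4 * (n : ℝ)) * |c * v i - t| ^ p ≤ 1 / 4 := by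
    rw [← Finset.mul_sum]
    have hc2p : ((c ^ 2 : ℝ)) ^ (p / 2) = c ^ p := by
      rw [show (c ^ 2 : ℝ) = c ^ ((2 : ℕ) : ℝ) by rw [Real.rpow_natCast],
        ← Real.rpow_mul hc0.le]
      norm_num
      congr 1
      ring
    have step1 : (∑ i ∈ S, (c * v i - t) ^ 2) ^ (p / 2) * sr ^ (1 - p / 2)
        ≤ c ^ p * sr ^ (1 - p / 2) := by
      rw [← hc2p]
      exact mul_le_mul_of_nonneg_right
        (Real.rpow_le_rpow hQ0 hQ (by positivity)) (Real.rpow_nonneg hsr0.le _)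
    have hβeq : (1 : ℝ) - p / 2 = (1 - α) / 2 := by rw [hp_def]; ring
    have numeric : 1 / (4 * (n : ℝ)) * (c ^ p * sr ^ (1 - p / 2)) ≤ 1 / 4 := by
      rw [hcp, hsr, hβeq]
      have e1 : ((d : ℝ) / 2) ^ ((1 - α) / 2)
          = (d : ℝ) ^ ((1 - α) / 2) * ((1 : ℝ) / 2) ^ ((1 - α) / 2) := by
        rw [show (d : ℝ) / 2 = (d : ℝ) * (1 / 2) by ring,
          Real.mul_rpow hd0'.le (by norm_num)]
      have e2 : (d : ℝ) ^ (-(1 - α) / 2) * (d : ℝ) ^ ((1 - α) / 2) = 1 := by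
        rw [← Real.rpow_add hd0', show -(1 - α) / 2 + (1 - α) / 2 = 0 by ring,
          Real.rpow_zero]
      have e3 : 1 / (4 * (n : ℝ)) * ((n : ℝ) * (d : ℝ) ^ (-(1 - α) / 2)
          * ((d : ℝ) ^ ((1 - α) / 2) * ((1 : ℝ) / 2) ^ ((1 - α) / 2)))
          = 1 / 4 * ((1 : ℝ) / 2) ^ ((1 - α) / 2) := by
        rw [show (n : ℝ) * (d : ℝ) ^ (-(1 - α) / 2)
            * ((d : ℝ) ^ ((1 - α) / 2) * ((1 : ℝ) / 2) ^ ((1 - α) / 2))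
            = (n : ℝ) * ((d : ℝ) ^ (-(1 - α) / 2) * (d : ℝ) ^ ((1 - α) / 2))
              * ((1 : ℝ) / 2) ^ ((1 - α) / 2) by ring, e2, mul_one]
        field_simp
      rw [e1, e3]
      have e4 : ((1 : ℝ) / 2) ^ ((1 - α) / 2) ≤ 1 :=
        Real.rpow_le_one (by norm_num) (by norm_num) hβ0
      linarith
    calc 1 / (4 * (n : ℝ)) * ∑ i ∈ S, |c * v i - t| ^ p
        ≤ 1 / (4 * (n : ℝ)) * ((∑ i ∈ S, (c * v i - t) ^ 2) ^ (p / 2) * sr ^ (1 - p / 2)) :=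
          mul_le_mul_of_nonneg_left hHolder hq0
      _ ≤ 1 / (4 * (n : ℝ)) * (c ^ p * sr ^ (1 - p / 2)) :=
          mul_le_mul_of_nonneg_left step1 hq0
      _ ≤ 1 / 4 := numeric
  -- Part A : the zero-atom term is at most 1/4
  have partA : (1 - (d : ℝ) / (8 * n)) * |t| ^ p ≤ 1 / 4 := by
    have htb : |t| ≤ c / (4 * n) * Real.sqrt sr := by
      rw [hbT, abs_mul]
      have hTabs : |T| ≤ Real.sqrt sr := by
        rw [← Real.sqrt_sq_eq_abs]
        exact Real.sqrt_le_sqrt hT2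
      have habs : |c / (4 * n)| = c / (4 * n) := abs_of_pos (by positivity)
      rw [habs]
      exact mul_le_mul_of_nonneg_left hTabs (by positivity)
    have hA : (c / (4 * n) * Real.sqrt sr) ^ p ≤ 1 / 4 := by
      have e1 : (c / (4 * n) * Real.sqrt sr) ^ p
          = c ^ p / (4 * (n : ℝ)) ^ p * sr ^ (p / 2) := by
        rw [Real.mul_rpow (by positivity) (Real.sqrt_nonneg _),
          Real.div_rpow hc0.le hn4.le, Real.sqrt_eq_rpow, ← Real.rpow_mul hsr0.le,
          show (1 : ℝ) / 2 * p = p / 2 by ring]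
      have e2 : c ^ p / (4 * (n : ℝ)) ^ p * sr ^ (p / 2)
          = ((d : ℝ) / (n : ℝ)) ^ α * (((2 : ℝ)) ^ (-(p / 2)) * ((4 : ℝ)) ^ (-p)) := by
        rw [hcp, hsr, Real.mul_rpow (by norm_num) hn0'.le]
        have f1 : ((d : ℝ) / 2) ^ (p / 2) = (d : ℝ) ^ (p / 2) * ((1 : ℝ) / 2) ^ (p / 2) := by
          rw [show (d : ℝ) / 2 = (d : ℝ) * (1 / 2) by ring,
            Real.mul_rpow hd0'.le (by norm_num)]
        have f2 : ((1 : ℝ) / 2) ^ (p / 2) = ((2 : ℝ)) ^ (-(p / 2)) := by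
          rw [show (1 : ℝ) / 2 = (2 : ℝ)⁻¹ by norm_num, Real.inv_rpow (by norm_num),
            ← Real.rpow_neg (by norm_num)]
        have f3 : (d : ℝ) ^ (-(1 - α) / 2) * (d : ℝ) ^ (p / 2) = (d : ℝ) ^ α := by
          rw [← Real.rpow_add hd0', show -(1 - α) / 2 + p / 2 = α by rw [hp_def]; ring]
        have f4 : ((4 : ℝ)) ^ (-p) = (((4 : ℝ)) ^ p)⁻¹ := Real.rpow_neg (by norm_num) p
        have f5 : ((d : ℝ) / (n : ℝ)) ^ α = (d : ℝ) ^ α / (n : ℝ) ^ α :=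
          Real.div_rpow hd0'.le hn0'.le α
        have f6 : (n : ℝ) / (n : ℝ) ^ p = ((n : ℝ) ^ α)⁻¹ := by
          nth_rewrite 1 [show (n : ℝ) = (n : ℝ) ^ (1 : ℝ) from (Real.rpow_one _).symm]
          rw [← Real.rpow_sub hn0', show (1 : ℝ) - p = -α by rw [hp_def]; ring,
            Real.rpow_neg hn0'.le]
        rw [f1, f2, f4, f5]
        rw [show (n : ℝ) * (d : ℝ) ^ (-(1 - α) / 2) / ((4 : ℝ) ^ p * (n : ℝ) ^ p)
              * ((d : ℝ) ^ (p / 2) * (2 : ℝ) ^ (-(p / 2)))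
            = ((d : ℝ) ^ (-(1 - α) / 2) * (d : ℝ) ^ (p / 2)) * ((n : ℝ) / (n : ℝ) ^ p)
              * ((2 : ℝ) ^ (-(p / 2)) * ((4 : ℝ) ^ p)⁻¹) by ring]
        rw [f3, f6]
        ring
      have e3 : ((d : ℝ) / (n : ℝ)) ^ α * (((2 : ℝ)) ^ (-(p / 2)) * ((4 : ℝ)) ^ (-p))
          ≤ ((8 : ℝ)) ^ α * (((2 : ℝ)) ^ (-(p / 2)) * ((4 : ℝ)) ^ (-p)) := by
        apply mul_le_mul_of_nonneg_right
          (Real.rpow_le_rpow (by positivity) hdn8 hα0.le)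
        positivity
      have e4 : ((8 : ℝ)) ^ α * (((2 : ℝ)) ^ (-(p / 2)) * ((4 : ℝ)) ^ (-p))
          = ((2 : ℝ)) ^ (3 * α + (-(p / 2)) + 2 * (-p)) := by
        rw [← h2_3, ← h2_2, ← Real.rpow_mul (by norm_num : (0:ℝ) ≤ 2),
          ← Real.rpow_mul (by norm_num : (0:ℝ) ≤ 2),
          ← Real.rpow_add (by norm_num : (0:ℝ) < 2),
          ← Real.rpow_add (by norm_num : (0:ℝ) < 2)]
        congr 1
        ring
      have e5 : ((2 : ℝ)) ^ (3 * α + (-(p / 2)) + 2 * (-p)) ≤ ((2 : ℝ)) ^ (-2 : ℝ) := by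
        apply Real.rpow_le_rpow_of_exponent_le one_le_two
        rw [hp_def]; linarith
      have e6 : ((2 : ℝ)) ^ (-2 : ℝ) = 1 / 4 := by
        rw [Real.rpow_neg (by norm_num), h2_2]
        norm_num
      calc (c / (4 * n) * Real.sqrt sr) ^ p
          = ((d : ℝ) / (n : ℝ)) ^ α * (((2 : ℝ)) ^ (-(p / 2)) * ((4 : ℝ)) ^ (-p)) := by
            rw [e1, e2]
        _ ≤ ((2 : ℝ)) ^ (3 * α + (-(p / 2)) + 2 * (-p)) := by rw [← e4]; exact e3
        _ ≤ 1 / 4 := by rw [← e6]; exact e5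
    calc (1 - (d : ℝ) / (8 * n)) * |t| ^ p
        ≤ 1 * |t| ^ p := by
          apply mul_le_mul_of_nonneg_right (by linarith [div_nonneg hd0'.le hn8.le])
          exact Real.rpow_nonneg (abs_nonneg t) p
      _ = |t| ^ p := one_mul _
      _ ≤ (c / (4 * n) * Real.sqrt sr) ^ p :=
          Real.rpow_le_rpow (abs_nonneg t) htb hp0.le
      _ ≤ 1 / 4 := hA
  linarith
end

section
/- Given η, α ∈ (0,1), there exist two distributions D₁ and D₂ over ℝ with means μ₁, μ₂ such that: (1) d_TV(D₁, D₂) ≤ η/4; (2) |μ₁ − μ₂| ≥ (1/4)·η^(α/(1+α)); and (3) both satisfy E[|X − μ|^(1+α)] ≤ 1. Explicitly one may take D₁ = δ₀ and D₂ placing mass 1 − η/4 at 0 and mass η/4 at (1/η)^(1/(1+α)). -/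
open MeasureTheory Real

lemma myIntegrableDirac {f : ℝ → ℝ} (hf : Measurable f) (a : ℝ) :
    Integrable f (Measure.dirac a) := by
  refine ⟨hf.aestronglyMeasurable, ?_⟩
  rw [HasFiniteIntegral]
  rw [lintegral_dirac' a (by measurability)]
  exact ENNReal.coe_lt_top

lemma myTwoPoint (a b p q : ℝ) (hp : 0 ≤ p) (hq : 0 ≤ q) (f : ℝ → ℝ)
    (hf : Measurable f) :
    ∫ x, f x ∂(ENNReal.ofReal p • Measure.dirac a + ENNReal.ofReal q • Measure.dirac b)
      = p * f a + q * f b := by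
  rw [integral_add_measure
      ((myIntegrableDirac hf a).smul_measure ENNReal.ofReal_ne_top)
      ((myIntegrableDirac hf b).smul_measure ENNReal.ofReal_ne_top),
    integral_smul_measure, integral_smul_measure, integral_dirac, integral_dirac,
    ENNReal.toReal_ofReal hp, ENNReal.toReal_ofReal hq, smul_eq_mul, smul_eq_mul]

/-- Lower bound construction for robust mean estimation under weak moments: given
`η, α ∈ (0,1)`, there exist probability distributions `D₁, D₂` over `ℝ` with means
`μ₁, μ₂` such that (1) `d_TV(D₁, D₂) ≤ η/4`, (2) `|μ₁ − μ₂| ≥ (1/4)·η^(α/(1+α))`, and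
(3) both satisfy the weak moment condition `E[|X − μ|^(1+α)] ≤ 1`. -/
theorem robust_lower_bound_distributions (η α : ℝ) (hη : η ∈ Set.Ioo (0 : ℝ) 1)
    (hα : α ∈ Set.Ioo (0 : ℝ) 1) :
    ∃ D₁ D₂ : Measure ℝ, IsProbabilityMeasure D₁ ∧ IsProbabilityMeasure D₂ ∧
      (∀ s : Set ℝ, MeasurableSet s → |(D₁ s).toReal - (D₂ s).toReal| ≤ η / 4) ∧
      |(∫ x, x ∂D₁) - ∫ x, x ∂D₂| ≥ (1 / 4) * η ^ (α / (1 + α)) ∧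
      (∫ x, |x - ∫ y, y ∂D₁| ^ (1 + α) ∂D₁) ≤ 1 ∧
      (∫ x, |x - ∫ y, y ∂D₂| ^ (1 + α) ∂D₂) ≤ 1 := by
  obtain ⟨hη0, hη1⟩ := hη
  obtain ⟨hα0, hα1⟩ := hα
  have h1α : (0:ℝ) < 1 + α := by linarith
  set M : ℝ := η ^ (-(1/(1+α))) with hMdef
  have hM0 : 0 < M := Real.rpow_pos_of_pos hη0 _
  set c : ℝ := η/4 with hcdef
  have hc0 : 0 < c := by positivity
  have hc1 : c < 1 := by rw [hcdef]; linarith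
  -- key power identities
  have hMpow : M ^ (1+α) = η⁻¹ := by
    rw [hMdef, ← Real.rpow_mul hη0.le]
    have : (-(1/(1+α))) * (1+α) = -1 := by field_simp
    rw [this, Real.rpow_neg_one]
  have hcM : c * M = (1/4) * η ^ (α/(1+α)) := by
    have : η * M = η ^ (α/(1+α)) := by
      rw [hMdef]
      nth_rewrite 1 [← Real.rpow_one η]
      rw [← Real.rpow_add hη0]
      congr 1
      field_simp; ring
    rw [hcdef, div_mul_eq_mul_div, this]; ring
  have hcMpos : 0 < c * M := by positivity
  refine ⟨Measure.dirac 0,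
    ENNReal.ofReal (1-c) • Measure.dirac 0 + ENNReal.ofReal c • Measure.dirac M,
    inferInstance, ?_, ?_, ?_, ?_, ?_⟩
  · constructor
    simp only [Measure.add_apply, Measure.smul_apply, smul_eq_mul, measure_univ, mul_one]
    rw [← ENNReal.ofReal_add (by linarith) hc0.le]
    norm_num
  · -- TV bound
    intro s hs
    classical
    have hd : ∀ a : ℝ, (Measure.dirac a s).toReal = if a ∈ s then 1 else 0 := by
      intro a
      rw [Measure.dirac_apply' a hs]
      by_cases h : a ∈ s <;> simp [h]
    simp only [Measure.add_apply, Measure.smul_apply, smul_eq_mul]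
    rw [ENNReal.toReal_add (by finiteness) (by finiteness), ENNReal.toReal_mul,
      ENNReal.toReal_mul, ENNReal.toReal_ofReal (by linarith), ENNReal.toReal_ofReal hc0.le,
      hd, hd]
    split_ifs <;> rw [abs_le] <;> constructor <;> simp <;> linarith
  · -- mean gap
    have h1 : ∫ x, x ∂(Measure.dirac (0:ℝ)) = 0 := by rw [integral_dirac]
    have h2 : ∫ x, x ∂(ENNReal.ofReal (1-c) • Measure.dirac 0 + ENNReal.ofReal c • Measure.dirac M)
        = c * M := by
      rw [myTwoPoint 0 M (1-c) c (by linarith) hc0.le (fun x => x) measurable_id]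
      ring
    rw [h1, h2, zero_sub, abs_neg, abs_of_pos hcMpos, hcM]
  · -- moment D₁
    have h1 : ∫ x, x ∂(Measure.dirac (0:ℝ)) = 0 := by rw [integral_dirac]
    rw [h1, integral_dirac]
    simp
    rw [Real.zero_rpow (ne_of_gt h1α)]
    norm_num
  · -- moment D₂
    have h2 : ∫ y, y ∂(ENNReal.ofReal (1-c) • Measure.dirac 0 + ENNReal.ofReal c • Measure.dirac M)
        = c * M := by
      rw [myTwoPoint 0 M (1-c) c (by linarith) hc0.le (fun x => x) measurable_id]
      ring
    rw [h2]
    rw [myTwoPoint 0 M (1-c) c (by linarith) hc0.le _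
      (by measurability)]
    have e0 : |0 - c * M| = c * M := by rw [zero_sub, abs_neg, abs_of_pos hcMpos]
    have eM : |M - c * M| = (1 - c) * M := by
      rw [abs_of_nonneg (by nlinarith)]; ring
    rw [e0, eM]
    have hcexp : c ^ (1+α) ≤ c := by
      nth_rewrite 2 [← Real.rpow_one c]
      exact Real.rpow_le_rpow_of_exponent_ge hc0 hc1.le (by linarith)
    have t1 : (1-c) * (c * M) ^ (1+α) ≤ 1/4 := by
      have : (c * M) ^ (1+α) = c ^ (1+α) * M ^ (1+α) :=
        Real.mul_rpow hc0.le hM0.le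
      rw [this, hMpow]
      have h1 : c ^ (1+α) * η⁻¹ ≤ c * η⁻¹ := by
        apply mul_le_mul_of_nonneg_right hcexp (by positivity)
      have h2 : c * η⁻¹ = 1/4 := by
        rw [hcdef]; field_simp
      nlinarith [Real.rpow_nonneg (mul_nonneg hc0.le hM0.le) (1+α),
        mul_le_mul_of_nonneg_left (h1.trans_eq h2)
          (sub_nonneg.mpr hc1.le)]
    have t2 : c * ((1-c) * M) ^ (1+α) ≤ 1/4 := by
      have hb : ((1-c) * M) ^ (1+α) ≤ M ^ (1+α) := by
        apply Real.rpow_le_rpow (by nlinarith) (by nlinarith) h1α.le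
      rw [hMpow] at hb
      calc c * ((1-c) * M) ^ (1+α) ≤ c * η⁻¹ :=
            mul_le_mul_of_nonneg_left hb hc0.le
        _ = 1/4 := by rw [hcdef]; field_simp
    linarith
end

section
/- Let D₂ be the distribution on ℝ placing mass 1 − η/4 at 0 and mass η/4 at η^(−1/(1+α)), for η, α ∈ (0,1). Then its mean is μ₂ = (1/4)·η^(α/(1+α)) and E_{X~D₂}[|X − μ₂|^(1+α)] ≤ 1. -/
open MeasureTheory Real

lemma integrable_dirac' (f : ℝ → ℝ) (a : ℝ) : Integrable f (Measure.dirac a) := by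
  have h : f =ᵐ[Measure.dirac a] fun _ => f a := by
    rw [MeasureTheory.ae_dirac_eq]; exact Filter.eventually_pure.2 rfl
  exact (integrable_const (f a)).congr h.symm

lemma integral_two_dirac (c d : ENNReal) (hc : c ≠ ⊤) (hd : d ≠ ⊤) (a b : ℝ) (f : ℝ → ℝ) :
    ∫ x, f x ∂(c • Measure.dirac a + d • Measure.dirac b)
      = c.toReal * f a + d.toReal * f b := by
  rw [integral_add_measure ((integrable_dirac' f a).smul_measure hc)
      ((integrable_dirac' f b).smul_measure hd),
    integral_smul_measure, integral_smul_measure, integral_dirac, integral_dirac]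
  simp [mul_comm]

/-- For `η, α ∈ (0,1)`, the two-point distribution `D₂` placing mass `1 − η/4` at `0` and
mass `η/4` at `η^(−1/(1+α))` has mean `μ₂ = (1/4)·η^(α/(1+α))` and satisfies
`E[|X − μ₂|^(1+α)] ≤ 1`. -/
theorem two_point_distribution_weak_moment (η α : ℝ) (hη : η ∈ Set.Ioo (0 : ℝ) 1)
    (hα : α ∈ Set.Ioo (0 : ℝ) 1) :
    let D₂ : Measure ℝ :=
      ENNReal.ofReal (1 - η / 4) • Measure.dirac 0 +
        ENNReal.ofReal (η / 4) • Measure.dirac (η ^ (-(1 : ℝ) / (1 + α)))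
    (∫ x, x ∂D₂) = (1 / 4) * η ^ (α / (1 + α)) ∧
      (∫ x, |x - (1 / 4) * η ^ (α / (1 + α))| ^ (1 + α) ∂D₂) ≤ 1 := by
  obtain ⟨hη0, hη1⟩ := hη
  obtain ⟨hα0, hα1⟩ := hα
  intro D₂
  have h1α : (0:ℝ) < 1 + α := by linarith
  have hm1 : (0:ℝ) ≤ 1 - η / 4 := by linarith
  have hm2 : (0:ℝ) ≤ η / 4 := by linarith
  have hp : (0:ℝ) < η ^ (-(1:ℝ) / (1 + α)) := rpow_pos_of_pos hη0 _
  have hexp : η * η ^ (-(1:ℝ) / (1 + α)) = η ^ (α / (1 + α)) := by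
    nth_rewrite 1 [← rpow_one η]
    rw [← rpow_add hη0]
    congr 1
    field_simp
    ring
  constructor
  · rw [show (∫ x, x ∂D₂) = _ from integral_two_dirac _ _ ENNReal.ofReal_ne_top
        ENNReal.ofReal_ne_top 0 (η ^ (-(1:ℝ) / (1 + α))) id]
    simp only [id]
    rw [ENNReal.toReal_ofReal hm2]
    rw [div_mul_eq_mul_div, hexp]
    ring
  · rw [show (∫ x, |x - 1 / 4 * η ^ (α / (1 + α))| ^ (1+α) ∂D₂) = _ from
      integral_two_dirac _ _ ENNReal.ofReal_ne_top ENNReal.ofReal_ne_top 0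
        (η ^ (-(1:ℝ) / (1 + α))) (fun x => |x - 1 / 4 * η ^ (α / (1 + α))| ^ (1+α))]
    rw [ENNReal.toReal_ofReal hm1, ENNReal.toReal_ofReal hm2]
    set p := η ^ (-(1:ℝ) / (1 + α)) with hpdef
    set μ := 1 / 4 * η ^ (α / (1 + α)) with hμ
    have hμ0 : 0 < μ := by positivity
    have hμle : μ ≤ 1 / 4 := by
      have : η ^ (α / (1 + α)) ≤ 1 :=
        rpow_le_one hη0.le hη1.le (by positivity)
      rw [hμ]; nlinarith
    have hp1 : 1 < p := by
      rw [hpdef]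
      apply one_lt_rpow_iff_of_pos hη0 |>.mpr
      right
      constructor
      · exact hη1
      · rw [div_neg_iff]; right; constructor <;> linarith
    have hple : p ^ (1+α) = η⁻¹ := by
      rw [hpdef, ← rpow_mul hη0.le]
      rw [show -(1:ℝ) / (1 + α) * (1 + α) = -1 by field_simp]
      rw [rpow_neg_one]
    have hA : |0 - μ| ^ (1+α) ≤ 1/4 := by
      rw [zero_sub, abs_neg, abs_of_pos hμ0]
      calc μ ^ (1+α) ≤ (1/4:ℝ) ^ (1+α) :=
            rpow_le_rpow hμ0.le hμle h1α.le
        _ ≤ (1/4:ℝ) ^ (1:ℝ) := by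
            apply rpow_le_rpow_of_exponent_ge (by norm_num) (by norm_num) (by linarith)
        _ = 1/4 := rpow_one _
    have hB : |p - μ| ^ (1+α) ≤ η⁻¹ := by
      have h1 : |p - μ| ≤ p := by
        rw [abs_of_pos (by linarith : (0:ℝ) < p - μ)]; linarith
      calc |p - μ| ^ (1+α) ≤ p ^ (1+α) := rpow_le_rpow (abs_nonneg _) h1 h1α.le
        _ = η⁻¹ := hple
    have hA0 : 0 ≤ |0 - μ| ^ (1+α) := rpow_nonneg (abs_nonneg _) _
    have hB0 : 0 ≤ |p - μ| ^ (1+α) := rpow_nonneg (abs_nonneg _) _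
    have t1 : (1 - η/4) * |0 - μ| ^ (1+α) ≤ 1/4 := by nlinarith
    have t2 : η/4 * |p - μ| ^ (1+α) ≤ 1/4 := by
      calc η/4 * |p - μ| ^ (1+α) ≤ η/4 * η⁻¹ := mul_le_mul_of_nonneg_left hB hm2
        _ = 1/4 := by field_simp
    linarith
end
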